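/- arXiv:2508.12958 — 2 statements merged into one kernel-verified Lean document; each statement's English description precedes it below -/
import Mathlib

section
/- Let X be a σ-finite measure space and h : X → ℝ_d measurable with M_h the multiplication operator on L²(X). Then M_h is bounded and everywhere defined if and only if h ∈ L^∞(X), and in this case ‖h‖_{L^∞} ≤ ‖M_h‖ ≤ 2^{d/2} ‖h‖_{L^∞}. -/
noncomputable section

open scoped BigOperators

/-- The negative-definite quadratic form on `Fin d → ℝ`, so that the Clifford
algebra generators satisfy `eᵢ² = -1` and anticommute. -/
def negQ (d : ℕ) : QuadraticForm ℝ (Fin d → ℝ) :=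
  QuadraticMap.weightedSumSquares ℝ (fun _ : Fin d => (-1 : ℝ))

/-- The real Clifford algebra ℝ_d. -/
abbrev Cl (d : ℕ) : Type := CliffordAlgebra (negQ d)

/-- The paravector `s₀ + s₁e₁ + ⋯ + s_d e_d`. -/
def pv {d : ℕ} (s₀ : ℝ) (v : Fin d → ℝ) : Cl d :=
  algebraMap ℝ (Cl d) s₀ + CliffordAlgebra.ι (negQ d) v

/-- The Clifford conjugate `s₀ - s₁e₁ - ⋯ - s_d e_d` of a paravector. -/
def pvConj {d : ℕ} (s₀ : ℝ) (v : Fin d → ℝ) : Cl d :=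
  algebraMap ℝ (Cl d) s₀ - CliffordAlgebra.ι (negQ d) v

/-- The squared modulus `s₀² + s₁² + ⋯ + s_d²` of a paravector. -/
def pvNormSq {d : ℕ} (s₀ : ℝ) (v : Fin d → ℝ) : ℝ := s₀ ^ 2 + ∑ i, v i ^ 2

/-- Clifford conjugation on ℝ_d (composite of involution and reversal). -/
def clConj {d : ℕ} (a : Cl d) : Cl d :=
  CliffordAlgebra.reverse (CliffordAlgebra.involute a)

open MeasureTheory

open scoped ENNReal

/-! Pointwise `‖ℓ (h x * f x)‖ ≤ 2^{d/2} ‖ℓ (h x)‖ ‖ℓ (f x)‖`, so Hölder's inequality with exponents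
`∞` and `2` gives the upper bound. Conversely, testing a bound `C` for `M_h` on the indicators
`1_s` of sets of finite measure gives `∫_s ‖h‖² ≤ ∫_s C²` for all such `s`, which by σ-finiteness
forces `‖h‖ ≤ C` almost everywhere. -/

section

variable {X : Type*} [MeasurableSpace X] {μ : Measure X}

theorem eLpNorm_top_le_of_forall_eLpNorm_indicator_le {F : Type*} [NormedAddCommGroup F]
    [SigmaFinite μ] {g : X → F} (hg : AEStronglyMeasurable g μ) {p : ℝ≥0∞} (hp0 : p ≠ 0)
    (hp : p ≠ ∞) {C : ℝ≥0∞}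
    (hC : ∀ s, MeasurableSet s → μ s < ∞ →
      eLpNorm (s.indicator g) p μ ≤ C * μ s ^ (1 / p.toReal)) :
    eLpNorm g ∞ μ ≤ C := by
  have hp_pos : 0 < p.toReal := ENNReal.toReal_pos hp0 hp
  have hpow : ∀ᵐ x ∂μ, ‖g x‖ₑ ^ p.toReal ≤ C ^ p.toReal := by
    refine ae_le_of_forall_setLIntegral_le_of_sigmaFinite₀ (hg.enorm.pow_const _)
      fun s hs hμs => ?_
    calc ∫⁻ x in s, ‖g x‖ₑ ^ p.toReal ∂μ = eLpNorm (s.indicator g) p μ ^ p.toReal := by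
          rw [eLpNorm_indicator_eq_eLpNorm_restrict hs,
            eLpNorm_eq_lintegral_rpow_enorm_toReal hp0 hp, ← ENNReal.rpow_mul,
            one_div_mul_cancel hp_pos.ne', ENNReal.rpow_one]
      _ ≤ (C * μ s ^ (1 / p.toReal)) ^ p.toReal := by gcongr; exact hC s hs hμs
      _ = ∫⁻ _ in s, C ^ p.toReal ∂μ := by
          rw [setLIntegral_const, ENNReal.mul_rpow_of_nonneg _ _ hp_pos.le, ← ENNReal.rpow_mul,
            one_div_mul_cancel hp_pos.ne', ENNReal.rpow_one, mul_comm]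
  rw [eLpNorm_exponent_top]
  refine eLpNormEssSup_le_of_ae_enorm_bound ?_
  filter_upwards [hpow] with x hx
  exact (ENNReal.rpow_le_rpow_iff hp_pos).1 hx

variable {A E : Type*} [NormedAddCommGroup E] [NormedSpace ℝ E]

theorem eLpNorm_top_le_of_eLpNorm_mul_le [SigmaFinite μ] [NonAssocSemiring A] [Module ℝ A]
    (ℓ : A ≃ₗ[ℝ] E) (hone : ‖ℓ 1‖ = 1) {h : X → A}
    (hh : AEStronglyMeasurable (fun x => ℓ (h x)) μ) {p : ℝ≥0∞} (hp0 : p ≠ 0) (hp : p ≠ ∞)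
    {C : ℝ≥0∞} (hC : ∀ f : X → A, MemLp (fun x => ℓ (f x)) p μ →
      eLpNorm (fun x => ℓ (h x * f x)) p μ ≤ C * eLpNorm (fun x => ℓ (f x)) p μ) :
    eLpNorm (fun x => ℓ (h x)) ∞ μ ≤ C := by
  refine eLpNorm_top_le_of_forall_eLpNorm_indicator_le hh hp0 hp fun s hs hμs => ?_
  have hind : (fun x => ℓ (s.indicator 1 x)) = s.indicator fun _ => ℓ 1 := by
    ext1 x; by_cases hx : x ∈ s <;> simp [hx]
  have hmul : (fun x => ℓ (h x * s.indicator 1 x)) = s.indicator fun x => ℓ (h x) := by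
    ext1 x; by_cases hx : x ∈ s <;> simp [hx]
  have hone' : ‖ℓ 1‖ₑ = 1 := by rw [← ofReal_norm, hone, ENNReal.ofReal_one]
  have := hC (s.indicator 1) (hind ▸ memLp_indicator_const p hs _ (Or.inr hμs.ne))
  rwa [hind, hmul, eLpNorm_indicator_const hs hp0 hp, hone', one_mul] at this

theorem eLpNorm_transport_mul_le [AddCommMonoid A] [Mul A] [Module ℝ A] (ℓ : A ≃ₗ[ℝ] E) {c : ℝ}
    (hc : ∀ a b : A, ‖ℓ (a * b)‖ ≤ c * ‖ℓ a‖ * ‖ℓ b‖) (h : X → A) {f : X → A}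
    (hf : AEStronglyMeasurable (fun x => ℓ (f x)) μ) (p : ℝ≥0∞) :
    eLpNorm (fun x => ℓ (h x * f x)) p μ
      ≤ ENNReal.ofReal c * eLpNorm (fun x => ℓ (h x)) ∞ μ * eLpNorm (fun x => ℓ (f x)) p μ := by
  have hpointwise : ∀ x, ‖ℓ (ℓ.symm (ℓ (h x)) * ℓ.symm (ℓ (f x)))‖₊
      ≤ c.toNNReal * ‖ℓ (h x)‖₊ * ‖ℓ (f x)‖₊ := fun x => by
    rw [← NNReal.coe_le_coe]
    simp only [LinearEquiv.symm_apply_apply, coe_nnnorm, NNReal.coe_mul]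
    exact (hc _ _).trans (by gcongr; exact Real.le_coe_toNNReal c)
  simpa only [LinearEquiv.symm_apply_apply, ENNReal.ofReal] using
    eLpNorm_le_eLpNorm_top_mul_eLpNorm p _ hf (fun u v => ℓ (ℓ.symm u * ℓ.symm v))
      c.toNNReal (ae_of_all _ hpointwise)

section TransportedMul

variable [NonUnitalNonAssocSemiring A] [Module ℝ A] [SMulCommClass ℝ A A] [IsScalarTower ℝ A A]
  (ℓ : A ≃ₗ[ℝ] E) {c : ℝ}

/-- `A` carries no topology, so measurability of pointwise products in `A` is obtained through
this continuous bilinear map on `E`. -/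
def transportedMul (hc : ∀ a b : A, ‖ℓ (a * b)‖ ≤ c * ‖ℓ a‖ * ‖ℓ b‖) : E →L[ℝ] E →L[ℝ] E :=
  (((LinearMap.mul ℝ A).compl₁₂ ℓ.symm.toLinearMap ℓ.symm.toLinearMap).compr₂
    ℓ.toLinearMap).mkContinuous₂ c fun u v => by simpa using hc (ℓ.symm u) (ℓ.symm v)

theorem transportedMul_apply (hc : ∀ a b : A, ‖ℓ (a * b)‖ ≤ c * ‖ℓ a‖ * ‖ℓ b‖) (a b : A) :
    transportedMul ℓ hc (ℓ a) (ℓ b) = ℓ (a * b) := by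
  simp [transportedMul]

theorem aestronglyMeasurable_transport_mul
    (hc : ∀ a b : A, ‖ℓ (a * b)‖ ≤ c * ‖ℓ a‖ * ‖ℓ b‖) {h f : X → A}
    (hh : AEStronglyMeasurable (fun x => ℓ (h x)) μ)
    (hf : AEStronglyMeasurable (fun x => ℓ (f x)) μ) :
    AEStronglyMeasurable (fun x => ℓ (h x * f x)) μ := by
  simpa only [transportedMul_apply] using (transportedMul ℓ hc).aestronglyMeasurable_comp₂ hh hf

end TransportedMul

end

/-- for σ-finite `X`, the multiplication operator `M_h` on
`L²(X, ℝ_d)` is bounded and everywhere defined iff `h ∈ L^∞(X)`, and in that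
case `‖h‖_∞ ≤ ‖M_h‖ ≤ 2^{d/2} ‖h‖_∞`. The norm on ℝ_d is the Euclidean norm
transported via `ℓ`; the product satisfies `|ab| ≤ 2^{d/2}|a||b|`. -/
theorem multiplication_operator_bounded_iff_Linfty {d : ℕ}
    {X : Type*} [MeasurableSpace X] (μ : Measure X) [SigmaFinite μ]
    (ℓ : Cl d ≃ₗ[ℝ] EuclideanSpace ℝ (Fin (2 ^ d)))
    (hone : ‖ℓ 1‖ = 1)
    (hsubmul : ∀ a b : Cl d, ‖ℓ (a * b)‖ ≤ 2 ^ ((d : ℝ) / 2) * ‖ℓ a‖ * ‖ℓ b‖)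
    (h : X → Cl d) (hmeas : AEStronglyMeasurable (fun x => ℓ (h x)) μ) :
    -- `M_h ∈ B(L²)` iff `h ∈ L^∞`:
    (((∀ f : X → Cl d, MemLp (fun x => ℓ (f x)) 2 μ →
        MemLp (fun x => ℓ (h x * f x)) 2 μ) ∧
      (∃ C : ℝ, 0 ≤ C ∧ ∀ f : X → Cl d, MemLp (fun x => ℓ (f x)) 2 μ →
        eLpNorm (fun x => ℓ (h x * f x)) 2 μ
          ≤ ENNReal.ofReal C * eLpNorm (fun x => ℓ (f x)) 2 μ)) ↔
      MemLp (fun x => ℓ (h x)) ⊤ μ) ∧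
    -- `‖M_h‖ ≤ 2^{d/2} ‖h‖_∞`:
    (∀ f : X → Cl d, MemLp (fun x => ℓ (f x)) 2 μ →
      eLpNorm (fun x => ℓ (h x * f x)) 2 μ
        ≤ ENNReal.ofReal (2 ^ ((d : ℝ) / 2)) * eLpNorm (fun x => ℓ (h x)) ⊤ μ
            * eLpNorm (fun x => ℓ (f x)) 2 μ) ∧
    -- `‖h‖_∞ ≤ ‖M_h‖`: any bound `C` for `M_h` dominates `‖h‖_∞`:
    (∀ C : ℝ, 0 ≤ C →
      (∀ f : X → Cl d, MemLp (fun x => ℓ (f x)) 2 μ →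
        eLpNorm (fun x => ℓ (h x * f x)) 2 μ
          ≤ ENNReal.ofReal C * eLpNorm (fun x => ℓ (f x)) 2 μ) →
      eLpNorm (fun x => ℓ (h x)) ⊤ μ ≤ ENNReal.ofReal C) := by
  have hupper : ∀ f : X → Cl d, MemLp (fun x => ℓ (f x)) 2 μ →
      eLpNorm (fun x => ℓ (h x * f x)) 2 μ ≤ ENNReal.ofReal (2 ^ ((d : ℝ) / 2))
        * eLpNorm (fun x => ℓ (h x)) ⊤ μ * eLpNorm (fun x => ℓ (f x)) 2 μ :=
    fun f hf => eLpNorm_transport_mul_le ℓ hsubmul h hf.1 2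
  have hlower : ∀ C : ℝ, (∀ f : X → Cl d, MemLp (fun x => ℓ (f x)) 2 μ →
      eLpNorm (fun x => ℓ (h x * f x)) 2 μ ≤ ENNReal.ofReal C * eLpNorm (fun x => ℓ (f x)) 2 μ) →
      eLpNorm (fun x => ℓ (h x)) ⊤ μ ≤ ENNReal.ofReal C := fun C =>
    eLpNorm_top_le_of_eLpNorm_mul_le ℓ hone hmeas two_ne_zero ENNReal.ofNat_ne_top
  refine ⟨⟨fun ⟨_, C, _, hC⟩ => ⟨hmeas, (hlower C hC).trans_lt ENNReal.ofReal_lt_top⟩,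
    fun hh => ⟨fun f hf => ⟨aestronglyMeasurable_transport_mul ℓ hsubmul hmeas hf.1,
      (hupper f hf).trans_lt (by finiteness [hh.2, hf.2])⟩, ?_⟩⟩,
    hupper, fun C _ => hlower C⟩
  refine ⟨2 ^ ((d : ℝ) / 2) * (eLpNorm (fun x => ℓ (h x)) ⊤ μ).toReal, by positivity,
    fun f hf => (hupper f hf).trans_eq ?_⟩
  rw [ENNReal.ofReal_mul (by positivity), ENNReal.ofReal_toReal hh.2.ne]
end
end

section
/- Let X be a σ-finite measure space and h : X → ℝ^{d+1} measurable. The S-spectrum of the multiplication operator M_h on L²(X) equals the axially symmetric hull of the essential range: σ_S(M_h) = [essran(h)] := { s ∈ ℝ^{d+1} : [s] ∩ essran(h) ≠ ∅ }. -/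
noncomputable section

open scoped BigOperators

open MeasureTheory

/-- Euclidean distance between paravectors `(p₀,pv)` in ℝ^{d+1}. -/
def pDist {d : ℕ} (p q : ℝ × (Fin d → ℝ)) : ℝ :=
  Real.sqrt ((p.1 - q.1) ^ 2 + ∑ i, (p.2 i - q.2 i) ^ 2)

/-- The multiplier function `h² - 2s₀h + |s|²` of `Q_s[M_h]`. -/
def qMul {d : ℕ} {X : Type*} (h₀ : X → ℝ) (hv : X → Fin d → ℝ)
    (s₀ : ℝ) (sv : Fin d → ℝ) (x : X) : Cl d :=
  pv (h₀ x) (hv x) * pv (h₀ x) (hv x) - (2 * s₀) • pv (h₀ x) (hv x)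
    + pvNormSq s₀ sv • (1 : Cl d)

/-- `Q_s[M_h]` has a bounded, everywhere defined inverse on `L²(X, ℝ_d)`:
it is injective, surjective onto `L²` and has a bounded inverse. -/
def QsMulInvertible {d : ℕ} {X : Type*} [MeasurableSpace X] (μ : Measure X)
    (ℓ : Cl d ≃ₗ[ℝ] EuclideanSpace ℝ (Fin (2 ^ d)))
    (h₀ : X → ℝ) (hv : X → Fin d → ℝ) (s₀ : ℝ) (sv : Fin d → ℝ) : Prop :=
  (∀ f : X → Cl d, MemLp (fun x => ℓ (f x)) 2 μ →
    MemLp (fun x => ℓ (qMul h₀ hv s₀ sv x * f x)) 2 μ →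
    (fun x => qMul h₀ hv s₀ sv x * f x) =ᵐ[μ] 0 → f =ᵐ[μ] 0) ∧
  (∀ w : X → Cl d, MemLp (fun x => ℓ (w x)) 2 μ →
    ∃ f : X → Cl d, MemLp (fun x => ℓ (f x)) 2 μ ∧
      MemLp (fun x => ℓ (qMul h₀ hv s₀ sv x * f x)) 2 μ ∧
      (fun x => qMul h₀ hv s₀ sv x * f x) =ᵐ[μ] w) ∧
  (∃ C : ℝ, 0 ≤ C ∧ ∀ f : X → Cl d, MemLp (fun x => ℓ (f x)) 2 μ →
    MemLp (fun x => ℓ (qMul h₀ hv s₀ sv x * f x)) 2 μ →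
    eLpNorm (fun x => ℓ (f x)) 2 μ
      ≤ ENNReal.ofReal C * eLpNorm (fun x => ℓ (qMul h₀ hv s₀ sv x * f x)) 2 μ)

/-- The essential range of the paravector-valued function `h = (h₀, hv)`. -/
def essRan {d : ℕ} {X : Type*} [MeasurableSpace X] (μ : Measure X)
    (h₀ : X → ℝ) (hv : X → Fin d → ℝ) : Set (ℝ × (Fin d → ℝ)) :=
  {s | ∀ ε : ℝ, 0 < ε → μ {x | pDist (h₀ x, hv x) s < ε} ≠ 0}

/-!
Write `a = h₀ - s₀`, `r = |hv|` and `p = |sv|`. The multiplier of `Q_s[M_h]` is the paravector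
`(a² - r² + p²) + 2a·hv`, whose squared modulus factors as `D (D + 4rp)`, where
`D = a² + (r - p)²` is the squared distance from `h` to the sphere `[s]`. Hence `|Q_s(h)|` lies
between `D` and `ρ (ρ + 2p)`, `ρ` being the distance from `h` to any point of `[s]`.

If `[s]` misses the essential range, compactness of `[s]` gives `D ≥ δ²` almost everywhere, and
`Q_s[M_h]` is inverted by multiplication with `|Q_s(h)|⁻² · conj(Q_s(h))`. If some `t ∈ [s]` lies
in the essential range, `Q_s[M_h]` is arbitrarily small on indicators of sets of finite positive
measure (σ-finiteness) on which `h` is close to `t`, so it is not bounded below.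
-/

section Paravector

open CliffordAlgebra

variable {d : ℕ}

theorem negQ_apply (v : Fin d → ℝ) : negQ d v = -∑ i, v i ^ 2 := by
  simp [negQ, QuadraticMap.weightedSumSquares_apply, pow_two]

theorem ι_mul_self (v : Fin d → ℝ) :
    ι (negQ d) v * ι (negQ d) v = (-∑ i, v i ^ 2) • (1 : Cl d) := by
  rw [ι_sq_scalar, negQ_apply, Algebra.algebraMap_eq_smul_one]

theorem pv_mul_pvConj (a : ℝ) (v : Fin d → ℝ) :
    pv a v * pvConj a v = algebraMap ℝ (Cl d) (pvNormSq a v) := by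
  simp only [pv, pvConj, pvNormSq, Algebra.algebraMap_eq_smul_one, add_mul, mul_sub,
    smul_mul_assoc, mul_smul_comm, one_mul, mul_one, ι_mul_self]
  module

theorem pv_mul_self (a : ℝ) (v : Fin d → ℝ) :
    pv a v * pv a v = pv (a ^ 2 - ∑ i, v i ^ 2) ((2 * a) • v) := by
  simp only [pv, Algebra.algebraMap_eq_smul_one, add_mul, mul_add, map_smul,
    smul_mul_assoc, mul_smul_comm, one_mul, mul_one, ι_mul_self]
  module

theorem pvConj_eq_pv_neg (a : ℝ) (v : Fin d → ℝ) : pvConj a v = pv a (-v) := by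
  rw [pvConj, pv, map_neg, sub_eq_add_neg]

theorem qMul_apply {X : Type*} (h₀ : X → ℝ) (hv : X → Fin d → ℝ) (s₀ : ℝ) (sv : Fin d → ℝ)
    (x : X) : qMul h₀ hv s₀ sv x
      = pv ((h₀ x - s₀) ^ 2 - ∑ i, hv x i ^ 2 + ∑ i, sv i ^ 2) ((2 * (h₀ x - s₀)) • hv x) := by
  rw [qMul, pv_mul_self]
  simp only [pvNormSq, pv, map_smul, Algebra.algebraMap_eq_smul_one]
  module

end Paravector

def MulInvertible {d : ℕ} {X : Type*} [MeasurableSpace X] (μ : Measure X)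
    (ℓ : Cl d ≃ₗ[ℝ] EuclideanSpace ℝ (Fin (2 ^ d))) (g : X → Cl d) : Prop :=
  (∀ f : X → Cl d, MemLp (fun x => ℓ (f x)) 2 μ → MemLp (fun x => ℓ (g x * f x)) 2 μ →
    (fun x => g x * f x) =ᵐ[μ] 0 → f =ᵐ[μ] 0) ∧
  (∀ w : X → Cl d, MemLp (fun x => ℓ (w x)) 2 μ →
    ∃ f : X → Cl d, MemLp (fun x => ℓ (f x)) 2 μ ∧ MemLp (fun x => ℓ (g x * f x)) 2 μ ∧
      (fun x => g x * f x) =ᵐ[μ] w) ∧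
  (∃ C : ℝ, 0 ≤ C ∧ ∀ f : X → Cl d, MemLp (fun x => ℓ (f x)) 2 μ →
    MemLp (fun x => ℓ (g x * f x)) 2 μ →
    eLpNorm (fun x => ℓ (f x)) 2 μ ≤ ENNReal.ofReal C * eLpNorm (fun x => ℓ (g x * f x)) 2 μ)

section MultiplicationOperator

variable {d : ℕ} {X : Type*} [MeasurableSpace X] {μ : Measure X}
  (ℓ : Cl d ≃ₗ[ℝ] EuclideanSpace ℝ (Fin (2 ^ d)))

theorem qsMulInvertible_iff_mulInvertible (h₀ : X → ℝ) (hv : X → Fin d → ℝ) (s₀ : ℝ)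
    (sv : Fin d → ℝ) : QsMulInvertible μ ℓ h₀ hv s₀ sv ↔ MulInvertible μ ℓ (qMul h₀ hv s₀ sv) :=
  Iff.rfl

theorem measurable_ℓ_pv {c₀ : X → ℝ} {cv : X → Fin d → ℝ} (hc₀ : Measurable c₀)
    (hcv : Measurable cv) : Measurable fun x => ℓ (pv (c₀ x) (cv x)) := by
  have hpv : ∀ a v, ℓ (pv a v) = a • ℓ 1 + (ℓ.toLinearMap ∘ₗ CliffordAlgebra.ι (negQ d)) v := by
    simp [pv, Algebra.algebraMap_eq_smul_one]
  simp only [hpv]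
  exact (hc₀.smul_const _).add ((LinearMap.continuous_of_finiteDimensional _).measurable.comp hcv)

theorem aestronglyMeasurable_ℓ_mul {u w : X → Cl d}
    (hu : AEStronglyMeasurable (fun x => ℓ (u x)) μ)
    (hw : AEStronglyMeasurable (fun x => ℓ (w x)) μ) :
    AEStronglyMeasurable (fun x => ℓ (u x * w x)) μ := by
  let B := ((LinearMap.mul ℝ (Cl d)).compl₁₂ ℓ.symm.toLinearMap ℓ.symm.toLinearMap).compr₂
    ℓ.toLinearMap
  let B' := LinearMap.toContinuousLinearMap (LinearMap.toContinuousLinearMap.toLinearMap ∘ₗ B)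
  simpa [B', B] using B'.aestronglyMeasurable_comp₂ hu hw

theorem norm_ℓ_le_inv_mul_norm_ℓ_pv_mul
    (hparamul : ∀ (t₀ : ℝ) (tv : Fin d → ℝ) (a : Cl d),
      ‖ℓ (pv t₀ tv * a)‖ = ‖ℓ (pv t₀ tv)‖ * ‖ℓ a‖)
    {a : ℝ} {v : Fin d → ℝ} {δ : ℝ} (hδ : 0 < δ) (h : δ ≤ ‖ℓ (pv a v)‖) (b : Cl d) :
    ‖ℓ b‖ ≤ δ⁻¹ * ‖ℓ (pv a v * b)‖ := by
  rw [hparamul, le_inv_mul_iff₀ hδ]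
  exact mul_le_mul_of_nonneg_right h (norm_nonneg _)

theorem mulInvertible_pv_of_ae_le_norm
    (hnorm : ∀ (t₀ : ℝ) (tv : Fin d → ℝ), ‖ℓ (pv t₀ tv)‖ ^ 2 = pvNormSq t₀ tv)
    (hparamul : ∀ (t₀ : ℝ) (tv : Fin d → ℝ) (a : Cl d),
      ‖ℓ (pv t₀ tv * a)‖ = ‖ℓ (pv t₀ tv)‖ * ‖ℓ a‖)
    {c₀ : X → ℝ} {cv : X → Fin d → ℝ} (hc₀ : Measurable c₀) (hcv : Measurable cv)
    {δ : ℝ} (hδ : 0 < δ) (hlow : ∀ᵐ x ∂μ, δ ≤ ‖ℓ (pv (c₀ x) (cv x))‖) :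
    MulInvertible μ ℓ fun x => pv (c₀ x) (cv x) := by
  have hbound (f : X → Cl d) : ∀ᵐ x ∂μ, ‖ℓ (f x)‖ ≤ δ⁻¹ * ‖ℓ (pv (c₀ x) (cv x) * f x)‖ :=
    hlow.mono fun x hx => norm_ℓ_le_inv_mul_norm_ℓ_pv_mul ℓ hparamul hδ hx (f x)
  refine ⟨fun f _ _ hf0 => ?_, fun w hw => ?_,
    δ⁻¹, inv_nonneg.2 hδ.le, fun f _ _ => eLpNorm_le_mul_eLpNorm_of_ae_le_mul (hbound f) 2⟩
  · filter_upwards [hbound f, hf0] with x hx hx0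
    simpa [hx0] using hx
  · let f x := (pvNormSq (c₀ x) (cv x))⁻¹ • (pvConj (c₀ x) (cv x) * w x)
    have hfw : (fun x => pv (c₀ x) (cv x) * f x) =ᵐ[μ] w := by
      filter_upwards [hlow] with x hx
      have hN : pvNormSq (c₀ x) (cv x) ≠ 0 := by
        rw [← hnorm]
        exact pow_ne_zero 2 (hδ.trans_le hx).ne'
      rw [mul_smul_comm, ← mul_assoc, pv_mul_pvConj, ← Algebra.smul_def, smul_smul,
        inv_mul_cancel₀ hN, one_smul]
    have hf_meas : AEStronglyMeasurable (fun x => ℓ (f x)) μ := by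
      simp only [f, map_smul, pvConj_eq_pv_neg]
      have hN : Measurable fun x => pvNormSq (c₀ x) (cv x) := by
        unfold pvNormSq; fun_prop
      exact hN.inv.aestronglyMeasurable.smul <| aestronglyMeasurable_ℓ_mul ℓ
        (measurable_ℓ_pv ℓ hc₀ hcv.neg).aestronglyMeasurable hw.1
    refine ⟨f, (hw.const_smul δ⁻¹).of_le hf_meas ?_, hw.ae_eq (hfw.fun_comp ℓ).symm, hfw⟩
    filter_upwards [hbound f, hfw] with x hx hx'
    simpa [hx', norm_smul, abs_of_pos hδ] using hx

theorem not_mulInvertible_of_forall_exists_norm_mul_le {g : X → Cl d}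
    (h : ∀ η > 0, ∃ f : X → Cl d, MemLp (fun x => ℓ (f x)) 2 μ ∧
      eLpNorm (fun x => ℓ (f x)) 2 μ ≠ 0 ∧ MemLp (fun x => ℓ (g x * f x)) 2 μ ∧
      ∀ x, ‖ℓ (g x * f x)‖ ≤ η * ‖ℓ (f x)‖) :
    ¬ MulInvertible μ ℓ g := by
  rintro ⟨-, -, C, hC, hCbound⟩
  obtain ⟨f, hf, hf0, hgf_mem, hgf⟩ := h (C + 1)⁻¹ (by positivity)
  have hCη : ENNReal.ofReal C * ENNReal.ofReal (C + 1)⁻¹ < 1 := by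
    rw [← ENNReal.ofReal_mul hC, ENNReal.ofReal_lt_one, ← div_eq_mul_inv, div_lt_one (by linarith)]
    linarith
  have := calc eLpNorm (fun x => ℓ (f x)) 2 μ
      ≤ ENNReal.ofReal C * eLpNorm (fun x => ℓ (g x * f x)) 2 μ := hCbound f hf hgf_mem
    _ ≤ ENNReal.ofReal C * (ENNReal.ofReal (C + 1)⁻¹ * eLpNorm (fun x => ℓ (f x)) 2 μ) := by
      gcongr
      exact eLpNorm_le_mul_eLpNorm_of_ae_le_mul (ae_of_all _ hgf) 2
    _ < eLpNorm (fun x => ℓ (f x)) 2 μ := by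
      simpa [mul_assoc, mul_comm] using ENNReal.mul_lt_mul_right hf0 hf.eLpNorm_ne_top hCη
  exact this.false

theorem not_mulInvertible_of_measure_norm_lt_ne_zero [SigmaFinite μ] {g : X → Cl d}
    (hg : Measurable fun x => ℓ (g x)) (hsmall : ∀ δ > 0, μ {x | ‖ℓ (g x)‖ < δ} ≠ 0) :
    ¬ MulInvertible μ ℓ g := by
  refine not_mulInvertible_of_forall_exists_norm_mul_le ℓ fun η hη => ?_
  have hℓ1 : ℓ 1 ≠ 0 := ℓ.map_ne_zero_iff.2 one_ne_zero
  obtain ⟨B, hBm, hBsmall, hB0, hBfin⟩ := Measure.exists_subset_measure_lt_top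
    (measurableSet_lt hg.norm measurable_const)
    (pos_iff_ne_zero.2 (hsmall _ (mul_pos hη (norm_pos_iff.2 hℓ1))))
  let f : X → Cl d := B.indicator 1
  have hℓf : (fun x => ℓ (f x)) = B.indicator fun _ => ℓ 1 := by
    ext1 x; by_cases hx : x ∈ B <;> simp [f, hx]
  have hℓgf : (fun x => ℓ (g x * f x)) = B.indicator fun x => ℓ (g x) := by
    ext1 x; by_cases hx : x ∈ B <;> simp [f, hx]
  have hgf : ∀ x, ‖ℓ (g x * f x)‖ ≤ η * ‖ℓ (f x)‖ := by
    intro x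
    by_cases hx : x ∈ B
    · simpa [f, hx] using (hBsmall hx).le
    · simp [f, hx]
  have hf : MemLp (fun x => ℓ (f x)) 2 μ := hℓf ▸ memLp_indicator_const 2 hBm _ (Or.inr hBfin.ne)
  refine ⟨f, hf, ?_, ?_, hgf⟩
  · rw [hℓf, eLpNorm_indicator_const hBm two_ne_zero ENNReal.ofNat_ne_top]
    exact mul_ne_zero (enorm_ne_zero.2 hℓ1) (ENNReal.rpow_pos hB0 hBfin.ne).ne'
  · exact (hf.const_smul η).of_le (hℓgf ▸ (hg.indicator hBm).aestronglyMeasurable)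
      (ae_of_all _ fun x => by simpa [norm_smul, abs_of_pos hη] using hgf x)

end MultiplicationOperator

section AxialSphere

variable {d : ℕ}

def axialSphere (s : ℝ × (Fin d → ℝ)) : Set (ℝ × (Fin d → ℝ)) :=
  {t | t.1 = s.1 ∧ ∑ i, t.2 i ^ 2 = ∑ i, s.2 i ^ 2}

def axialDistSq (q s : ℝ × (Fin d → ℝ)) : ℝ :=
  (q.1 - s.1) ^ 2 + (√(∑ i, q.2 i ^ 2) - √(∑ i, s.2 i ^ 2)) ^ 2

theorem pDist_sq (p q : ℝ × (Fin d → ℝ)) :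
    pDist p q ^ 2 = (p.1 - q.1) ^ 2 + ∑ i, (p.2 i - q.2 i) ^ 2 :=
  Real.sq_sqrt (by positivity)

theorem axialDistSq_le_pDist_sq {q s t : ℝ × (Fin d → ℝ)} (ht : t ∈ axialSphere s) :
    axialDistSq q s ≤ pDist q t ^ 2 := by
  obtain ⟨ht₀, htv⟩ := ht
  have hsum : ∑ i, (q.2 i - t.2 i) ^ 2
      = ∑ i, q.2 i ^ 2 - 2 * ∑ i, q.2 i * t.2 i + ∑ i, t.2 i ^ 2 := by
    simp only [sub_sq, Finset.sum_add_distrib, Finset.sum_sub_distrib, Finset.mul_sum, mul_assoc]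
  rw [axialDistSq, pDist_sq, hsum, ht₀, ← htv]
  nlinarith [Real.sum_mul_le_sqrt_mul_sqrt Finset.univ q.2 t.2,
    Real.sq_sqrt (by positivity : 0 ≤ ∑ i, q.2 i ^ 2),
    Real.sq_sqrt (by positivity : 0 ≤ ∑ i, t.2 i ^ 2)]

theorem exists_mem_axialSphere_pDist_sq_eq (q s : ℝ × (Fin d → ℝ)) :
    ∃ t ∈ axialSphere s, pDist q t ^ 2 = axialDistSq q s := by
  have hP := Real.sq_sqrt (by positivity : 0 ≤ ∑ i, s.2 i ^ 2)
  rcases (by positivity : 0 ≤ ∑ i, q.2 i ^ 2).eq_or_lt with hR | hR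
  · have hq : q.2 = 0 := funext fun i => by
      have := (Fintype.sum_eq_zero_iff_of_nonneg fun i => sq_nonneg (q.2 i)).1 hR.symm
      simpa using congrFun this i
    refine ⟨s, ⟨rfl, rfl⟩, ?_⟩
    simp [pDist_sq, axialDistSq, hq, hP]
  · have hR' := Real.sq_sqrt hR.le
    have hr : 0 < √(∑ i, q.2 i ^ 2) := Real.sqrt_pos.2 hR
    refine ⟨(s.1, (√(∑ i, s.2 i ^ 2) / √(∑ i, q.2 i ^ 2)) • q.2), ⟨rfl, ?_⟩, ?_⟩
    · simp only [Pi.smul_apply, smul_eq_mul, mul_pow, ← Finset.mul_sum, div_pow, hP, hR']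
      field_simp
    · have hdiff (c : ℝ) (i : Fin d) : q.2 i - (c • q.2) i = (1 - c) * q.2 i := by
        simp only [Pi.smul_apply, smul_eq_mul]; ring
      simp only [pDist_sq, axialDistSq, hdiff, mul_pow, ← Finset.mul_sum]
      congr 1
      field_simp
      linear_combination -(√(∑ i, q.2 i ^ 2) - √(∑ i, s.2 i ^ 2)) ^ 2 * hR'

theorem isCompact_axialSphere (s : ℝ × (Fin d → ℝ)) : IsCompact (axialSphere s) := by
  refine Metric.isCompact_of_isClosed_isBounded ?_ ?_
  · exact (isClosed_eq continuous_fst continuous_const).inter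
      (isClosed_eq (by fun_prop) continuous_const)
  · refine ((Bornology.isBounded_singleton (x := s.1)).prod
      (Metric.isBounded_closedBall (x := 0) (r := √(∑ i, s.2 i ^ 2)))).subset ?_
    rintro t ⟨ht₀, htv⟩
    refine ⟨ht₀, mem_closedBall_zero_iff.2
      ((pi_norm_le_iff_of_nonneg (by positivity)).2 fun i => ?_)⟩
    rw [Real.norm_eq_abs, ← htv]
    exact Real.abs_le_sqrt (Finset.single_le_sum (f := fun j => t.2 j ^ 2)
      (fun j _ => sq_nonneg _) (Finset.mem_univ i))

end AxialSphere

section QsNorm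

variable {d : ℕ} {X : Type*} {ℓ : Cl d ≃ₗ[ℝ] EuclideanSpace ℝ (Fin (2 ^ d))}
  (h₀ : X → ℝ) (hv : X → Fin d → ℝ) (s₀ : ℝ) (sv : Fin d → ℝ) (x : X)

theorem norm_ℓ_qMul_sq
    (hnorm : ∀ (t₀ : ℝ) (tv : Fin d → ℝ), ‖ℓ (pv t₀ tv)‖ ^ 2 = pvNormSq t₀ tv) :
    ‖ℓ (qMul h₀ hv s₀ sv x)‖ ^ 2 = axialDistSq (h₀ x, hv x) (s₀, sv) *
      (axialDistSq (h₀ x, hv x) (s₀, sv) + 4 * √(∑ i, hv x i ^ 2) * √(∑ i, sv i ^ 2)) := by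
  have key : ((h₀ x - s₀) ^ 2 - √(∑ i, hv x i ^ 2) ^ 2 + √(∑ i, sv i ^ 2) ^ 2) ^ 2
      + 4 * (h₀ x - s₀) ^ 2 * √(∑ i, hv x i ^ 2) ^ 2
      = ((h₀ x - s₀) ^ 2 + (√(∑ i, hv x i ^ 2) - √(∑ i, sv i ^ 2)) ^ 2) *
        ((h₀ x - s₀) ^ 2 + (√(∑ i, hv x i ^ 2) - √(∑ i, sv i ^ 2)) ^ 2
          + 4 * √(∑ i, hv x i ^ 2) * √(∑ i, sv i ^ 2)) := by ring
  rw [Real.sq_sqrt (by positivity), Real.sq_sqrt (by positivity)] at key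
  rw [qMul_apply, hnorm, pvNormSq, axialDistSq, ← key]
  simp only [Pi.smul_apply, smul_eq_mul, mul_pow, ← Finset.mul_sum]
  ring

theorem axialDistSq_le_norm_ℓ_qMul
    (hnorm : ∀ (t₀ : ℝ) (tv : Fin d → ℝ), ‖ℓ (pv t₀ tv)‖ ^ 2 = pvNormSq t₀ tv) :
    axialDistSq (h₀ x, hv x) (s₀, sv) ≤ ‖ℓ (qMul h₀ hv s₀ sv x)‖ := by
  have hD : 0 ≤ axialDistSq (h₀ x, hv x) (s₀, sv) := by unfold axialDistSq; positivity
  rw [← pow_le_pow_iff_left₀ hD (norm_nonneg _) two_ne_zero,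
    norm_ℓ_qMul_sq h₀ hv s₀ sv x hnorm, sq]
  gcongr
  exact le_add_of_nonneg_right (by positivity)

theorem norm_ℓ_qMul_le_of_mem_axialSphere
    (hnorm : ∀ (t₀ : ℝ) (tv : Fin d → ℝ), ‖ℓ (pv t₀ tv)‖ ^ 2 = pvNormSq t₀ tv)
    {t : ℝ × (Fin d → ℝ)} (ht : t ∈ axialSphere (s₀, sv)) :
    ‖ℓ (qMul h₀ hv s₀ sv x)‖
      ≤ pDist (h₀ x, hv x) t * (pDist (h₀ x, hv x) t + 2 * √(∑ i, sv i ^ 2)) := by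
  have hDρ := axialDistSq_le_pDist_sq (q := (h₀ x, hv x)) ht
  have hρ : 0 ≤ pDist (h₀ x, hv x) t := Real.sqrt_nonneg _
  have hr : √(∑ i, hv x i ^ 2) ≤ pDist (h₀ x, hv x) t + √(∑ i, sv i ^ 2) := by
    have : (√(∑ i, hv x i ^ 2) - √(∑ i, sv i ^ 2)) ^ 2 ≤ pDist (h₀ x, hv x) t ^ 2 :=
      le_trans (by simp only [axialDistSq]; nlinarith) hDρ
    linarith [(abs_le_of_sq_le_sq' this hρ).2]
  rw [← pow_le_pow_iff_left₀ (norm_nonneg _) (by positivity) two_ne_zero,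
    norm_ℓ_qMul_sq h₀ hv s₀ sv x hnorm]
  calc _ ≤ pDist (h₀ x, hv x) t ^ 2 * (pDist (h₀ x, hv x) t ^ 2
        + 4 * (pDist (h₀ x, hv x) t + √(∑ i, sv i ^ 2)) * √(∑ i, sv i ^ 2)) := by
        have hD : 0 ≤ axialDistSq (h₀ x, hv x) (s₀, sv) := by unfold axialDistSq; positivity
        gcongr
    _ = _ := by ring

end QsNorm

section Compactness

open Topology

variable {X : Type*} [MeasurableSpace X] {μ : Measure X}

theorem IsCompact.exists_pos_ae_le_dist {Y : Type*} [PseudoMetricSpace Y] {K : Set Y}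
    (hK : IsCompact K) {f : X → Y} (hnull : ∀ y ∈ K, ∃ ε > 0, μ {x | dist (f x) y < ε} = 0) :
    ∃ δ > 0, ∀ᵐ x ∂μ, ∀ y ∈ K, δ ≤ dist (f x) y := by
  have hdisj : Disjoint (𝓝ˢ K) (Filter.map f (ae μ)) := by
    refine hK.disjoint_nhdsSet_left.2 fun y hy => ?_
    obtain ⟨ε, hε, hε0⟩ := hnull y hy
    have hae : ∀ᵐ x ∂μ, f x ∉ Metric.ball y ε := measure_eq_zero_iff_ae_notMem.1 hε0
    exact Filter.disjoint_iff.2 ⟨Metric.ball y ε, Metric.ball_mem_nhds y hε, (Metric.ball y ε)ᶜ,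
      Filter.mem_map.2 hae, disjoint_compl_right⟩
  obtain ⟨δ, hδ, hK⟩ := (Metric.hasBasis_nhdsSet_thickening hK).disjoint_iff_left.1 hdisj
  have hae : ∀ᵐ x ∂μ, f x ∉ Metric.thickening δ K := Filter.mem_map.1 hK
  refine ⟨δ, hδ, hae.mono fun x hx y hy => ?_⟩
  by_contra! h
  exact hx (Metric.mem_thickening_iff.2 ⟨y, hy, h⟩)

end Compactness

section EuclideanModel

variable {d : ℕ}

def toEuclideanSpace (p : ℝ × (Fin d → ℝ)) : EuclideanSpace ℝ (Fin (d + 1)) :=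
  WithLp.toLp 2 (Fin.cons p.1 p.2)

theorem dist_toEuclideanSpace (p q : ℝ × (Fin d → ℝ)) :
    dist (toEuclideanSpace p) (toEuclideanSpace q) = pDist p q := by
  simp [EuclideanSpace.dist_eq, pDist, toEuclideanSpace, Fin.sum_univ_succ, Real.dist_eq, sq_abs]

theorem continuous_toEuclideanSpace : Continuous (toEuclideanSpace (d := d)) := by
  unfold toEuclideanSpace
  fun_prop

end EuclideanModel

section SSpectrum

variable {d : ℕ} {X : Type*} [MeasurableSpace X] {μ : Measure X}
  {ℓ : Cl d ≃ₗ[ℝ] EuclideanSpace ℝ (Fin (2 ^ d))} {h₀ : X → ℝ} {hv : X → Fin d → ℝ}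

theorem measurable_ℓ_qMul (hm₀ : Measurable h₀) (hmv : Measurable hv) (s₀ : ℝ)
    (sv : Fin d → ℝ) : Measurable fun x => ℓ (qMul h₀ hv s₀ sv x) := by
  simp only [qMul_apply]
  exact measurable_ℓ_pv ℓ (by fun_prop) (by fun_prop)

theorem exists_pos_ae_le_pDist_of_disjoint_essRan {s : ℝ × (Fin d → ℝ)}
    (hs : ∀ t ∈ axialSphere s, t ∉ essRan μ h₀ hv) :
    ∃ δ > 0, ∀ᵐ x ∂μ, ∀ t ∈ axialSphere s, δ ≤ pDist (h₀ x, hv x) t := by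
  have hnull : ∀ y ∈ toEuclideanSpace '' axialSphere s,
      ∃ ε > 0, μ {x | dist (toEuclideanSpace (h₀ x, hv x)) y < ε} = 0 := by
    rintro _ ⟨t, ht, rfl⟩
    simpa [essRan, dist_toEuclideanSpace] using hs t ht
  obtain ⟨δ, hδ, hae⟩ :=
    ((isCompact_axialSphere s).image continuous_toEuclideanSpace).exists_pos_ae_le_dist hnull
  exact ⟨δ, hδ, hae.mono fun x hx t ht => dist_toEuclideanSpace (h₀ x, hv x) t ▸ hx _ ⟨t, ht, rfl⟩⟩

theorem qsMulInvertible_of_disjoint_essRan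
    (hnorm : ∀ (t₀ : ℝ) (tv : Fin d → ℝ), ‖ℓ (pv t₀ tv)‖ ^ 2 = pvNormSq t₀ tv)
    (hparamul : ∀ (t₀ : ℝ) (tv : Fin d → ℝ) (a : Cl d),
      ‖ℓ (pv t₀ tv * a)‖ = ‖ℓ (pv t₀ tv)‖ * ‖ℓ a‖)
    (hm₀ : Measurable h₀) (hmv : Measurable hv) {s : ℝ × (Fin d → ℝ)}
    (hs : ∀ t ∈ axialSphere s, t ∉ essRan μ h₀ hv) : QsMulInvertible μ ℓ h₀ hv s.1 s.2 := by
  obtain ⟨δ, hδ, hae⟩ := exists_pos_ae_le_pDist_of_disjoint_essRan hs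
  have hlow : ∀ᵐ x ∂μ, δ ^ 2 ≤ ‖ℓ (qMul h₀ hv s.1 s.2 x)‖ := by
    filter_upwards [hae] with x hx
    obtain ⟨t, ht, hdist⟩ := exists_mem_axialSphere_pDist_sq_eq (h₀ x, hv x) s
    calc δ ^ 2 ≤ pDist (h₀ x, hv x) t ^ 2 := pow_le_pow_left₀ hδ.le (hx t ht) 2
      _ = axialDistSq (h₀ x, hv x) s := hdist
      _ ≤ ‖ℓ (qMul h₀ hv s.1 s.2 x)‖ := axialDistSq_le_norm_ℓ_qMul h₀ hv s.1 s.2 x hnorm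
  simp only [qMul_apply] at hlow
  rw [qsMulInvertible_iff_mulInvertible, funext (qMul_apply h₀ hv s.1 s.2)]
  exact mulInvertible_pv_of_ae_le_norm ℓ hnorm hparamul (by fun_prop) (by fun_prop)
    (by positivity) hlow

theorem not_qsMulInvertible_of_mem_essRan [SigmaFinite μ]
    (hnorm : ∀ (t₀ : ℝ) (tv : Fin d → ℝ), ‖ℓ (pv t₀ tv)‖ ^ 2 = pvNormSq t₀ tv)
    (hm₀ : Measurable h₀) (hmv : Measurable hv) {s t : ℝ × (Fin d → ℝ)}
    (ht : t ∈ axialSphere s) (hte : t ∈ essRan μ h₀ hv) :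
    ¬ QsMulInvertible μ ℓ h₀ hv s.1 s.2 := by
  refine not_mulInvertible_of_measure_norm_lt_ne_zero ℓ (measurable_ℓ_qMul hm₀ hmv _ _)
    fun δ hδ => ?_
  set p := √(∑ i, s.2 i ^ 2)
  set ε := min 1 (δ / (1 + 2 * p))
  have hε : 0 < ε := lt_min one_pos (by positivity)
  refine fun h0 => hte ε hε (measure_mono_null (fun x (hx : pDist (h₀ x, hv x) t < ε) => ?_) h0)
  have hρ : 0 ≤ pDist (h₀ x, hv x) t := Real.sqrt_nonneg _
  calc ‖ℓ (qMul h₀ hv s.1 s.2 x)‖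
      ≤ pDist (h₀ x, hv x) t * (pDist (h₀ x, hv x) t + 2 * p) :=
        norm_ℓ_qMul_le_of_mem_axialSphere h₀ hv s.1 s.2 x hnorm ht
    _ < ε * (ε + 2 * p) := by gcongr
    _ ≤ ε * (1 + 2 * p) := by gcongr; exact min_le_left _ _
    _ ≤ δ := (le_div_iff₀ (by positivity)).1 (min_le_right _ _)

end SSpectrum

theorem sSpectrum_of_multiplication_operator_general {d : ℕ}
    {X : Type*} [MeasurableSpace X] (μ : Measure X) [SigmaFinite μ]
    (ℓ : Cl d ≃ₗ[ℝ] EuclideanSpace ℝ (Fin (2 ^ d)))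
    (hnorm : ∀ (t₀ : ℝ) (tv : Fin d → ℝ), ‖ℓ (pv t₀ tv)‖ ^ 2 = pvNormSq t₀ tv)
    (hparamul : ∀ (t₀ : ℝ) (tv : Fin d → ℝ) (a : Cl d),
      ‖ℓ (pv t₀ tv * a)‖ = ‖ℓ (pv t₀ tv)‖ * ‖ℓ a‖)
    (h₀ : X → ℝ) (hv : X → Fin d → ℝ)
    (hm₀ : Measurable h₀) (hmv : Measurable hv) :
    {s : ℝ × (Fin d → ℝ) | ¬ QsMulInvertible μ ℓ h₀ hv s.1 s.2}
      = {s : ℝ × (Fin d → ℝ) | ∃ t ∈ essRan μ h₀ hv,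
          t.1 = s.1 ∧ ∑ i, t.2 i ^ 2 = ∑ i, s.2 i ^ 2} := by
  ext s
  constructor
  · intro hs
    by_contra hhull
    exact hs (qsMulInvertible_of_disjoint_essRan hnorm hparamul hm₀ hmv
      fun t ht hte => hhull ⟨t, hte, ht⟩)
  · rintro ⟨t, hte, ht⟩
    exact not_qsMulInvertible_of_mem_essRan hnorm hm₀ hmv ht hte

/-- for σ-finite `X` and measurable paravector-valued `h`, the
`S`-spectrum of the multiplication operator `M_h` on `L²(X, ℝ_d)` is the
axially symmetric hull of the essential range:
`σ_S(M_h) = [essran(h)] = {s : [s] ∩ essran(h) ≠ ∅}`. -/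
theorem sSpectrum_of_multiplication_operator {d : ℕ}
    {X : Type*} [MeasurableSpace X] (μ : Measure X) [SigmaFinite μ]
    (ℓ : Cl d ≃ₗ[ℝ] EuclideanSpace ℝ (Fin (2 ^ d)))
    (hnorm : ∀ (t₀ : ℝ) (tv : Fin d → ℝ), ‖ℓ (pv t₀ tv)‖ ^ 2 = pvNormSq t₀ tv)
    (hparamul : ∀ (t₀ : ℝ) (tv : Fin d → ℝ) (a : Cl d),
      ‖ℓ (pv t₀ tv * a)‖ = ‖ℓ (pv t₀ tv)‖ * ‖ℓ a‖)
    (h₀ : X → ℝ) (hv : X → Fin d → ℝ)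
    (hm₀ : Measurable h₀) (hmv : Measurable hv)
    (hmeas : AEStronglyMeasurable (fun x => ℓ (pv (h₀ x) (hv x))) μ) :
    {s : ℝ × (Fin d → ℝ) | ¬ QsMulInvertible μ ℓ h₀ hv s.1 s.2}
      = {s : ℝ × (Fin d → ℝ) | ∃ t ∈ essRan μ h₀ hv,
          t.1 = s.1 ∧ ∑ i, t.2 i ^ 2 = ∑ i, s.2 i ^ 2} :=
  sSpectrum_of_multiplication_operator_general μ ℓ hnorm hparamul h₀ hv hm₀ hmv
end
end
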